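/- arXiv:2002.09194 — 3 statements merged into one kernel-verified Lean document; each statement's English description precedes it below -/
import Mathlib

section
/- Fix L > 0 and Q > 0, and define r(C) = L/C + Q²/(2C²) + (Q²/(2C²))·√(1 + 4LC/Q²) for C > 0. Then r is strictly monotonically decreasing in C on (0, ∞). -/
theorem stmt_1 (L Q : ℝ) (hL : 0 < L) (hQ : 0 < Q) :
    StrictAntiOn
      (fun C : ℝ => L / C + Q ^ 2 / (2 * C ^ 2)
        + (Q ^ 2 / (2 * C ^ 2)) * Real.sqrt (1 + 4 * L * C / Q ^ 2))
      (Set.Ioi 0) := by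
  intro a ha b hb hab
  simp only [Set.mem_Ioi] at ha hb
  have hQ2 : (0:ℝ) < Q ^ 2 := by positivity
  have h1 : L / b < L / a := div_lt_div_of_pos_left hL ha hab
  have h2 : Q ^ 2 / (2 * b ^ 2) ≤ Q ^ 2 / (2 * a ^ 2) := by
    apply div_le_div_of_nonneg_left (le_of_lt hQ2) (by positivity)
    nlinarith
  set sa := Real.sqrt (1 + 4 * L * a / Q ^ 2) with hsa
  set sb := Real.sqrt (1 + 4 * L * b / Q ^ 2) with hsb
  have hsa0 : 0 ≤ sa := Real.sqrt_nonneg _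
  have hsb0 : 0 ≤ sb := Real.sqrt_nonneg _
  have hsa2 : sa ^ 2 = 1 + 4 * L * a / Q ^ 2 := by
    rw [hsa, Real.sq_sqrt]; positivity
  have hsb2 : sb ^ 2 = 1 + 4 * L * b / Q ^ 2 := by
    rw [hsb, Real.sq_sqrt]; positivity
  have hda : 0 ≤ 4 * L * a / Q ^ 2 := by positivity
  have hdb : 0 ≤ 4 * L * b / Q ^ 2 := by positivity
  have hsa1 : 1 ≤ sa := by nlinarith
  have hsb1 : 1 ≤ sb := by nlinarith
  clear_value sa sb
  -- key: a^2 * sb ≤ b^2 * sa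
  have hkey : a ^ 2 * sb ≤ b ^ 2 * sa := by
    have hsq : (a ^ 2 * sb) ^ 2 ≤ (b ^ 2 * sa) ^ 2 := by
      have e1 : (a ^ 2 * sb) ^ 2 = a ^ 4 * (1 + 4 * L * b / Q ^ 2) := by
        rw [mul_pow, hsb2]; ring
      have e2 : (b ^ 2 * sa) ^ 2 = b ^ 4 * (1 + 4 * L * a / Q ^ 2) := by
        rw [mul_pow, hsa2]; ring
      rw [e1, e2, div_eq_mul_inv, div_eq_mul_inv]
      have hQi : 0 < (Q ^ 2)⁻¹ := by positivity
      have hp4 : a ^ 4 ≤ b ^ 4 := pow_le_pow_left₀ ha.le hab.le 4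
      have hp3 : a ^ 3 ≤ b ^ 3 := pow_le_pow_left₀ ha.le hab.le 3
      have hab4 : a ^ 4 * b ≤ a * b ^ 4 := by
        have := mul_le_mul_of_nonneg_right hp3 (mul_pos ha hb).le
        nlinarith
      have hc : 0 ≤ 4 * L * (Q ^ 2)⁻¹ := by positivity
      nlinarith [mul_le_mul_of_nonneg_left hab4 hc]
    nlinarith [mul_pos (pow_pos ha 2) (lt_of_lt_of_le one_pos hsb1),
      mul_pos (pow_pos hb 2) (lt_of_lt_of_le one_pos hsa1)]
  have h3 : Q ^ 2 / (2 * b ^ 2) * sb ≤ Q ^ 2 / (2 * a ^ 2) * sa := by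
    rw [div_mul_eq_mul_div, div_mul_eq_mul_div, div_le_div_iff₀ (by positivity) (by positivity)]
    calc Q ^ 2 * sb * (2 * a ^ 2) = 2 * Q ^ 2 * (a ^ 2 * sb) := by ring
      _ ≤ 2 * Q ^ 2 * (b ^ 2 * sa) := by
          apply mul_le_mul_of_nonneg_left hkey; positivity
      _ = Q ^ 2 * sa * (2 * b ^ 2) := by ring
  simp only
  rw [← hsa, ← hsb]
  linarith
end

section
/- Fix L > 0 and Q > 0, and define r(C) = L/C + Q²/(2C²) + (Q²/(2C²))·√(1 + 4LC/Q²) for C > 0. Then r is a convex function of C on (0, ∞). -/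
/-!
Writing `r = t²`, the defining relation `L = r C - Q √r` says that `t` is the positive root of
`C t² - Q t - L = 0`, so `t = (Q + √(Q² + 4LC)) / (2C) = 2L / (√(Q² + 4LC) - Q)`. The denominator
`√(Q² + 4LC) - Q` is positive and concave in `C`, hence its reciprocal `t` is convex, and so is the
square `r` of the nonnegative convex function `t`.
-/

open Set

theorem ConcaveOn.inv {𝕜 E : Type*} [Field 𝕜] [LinearOrder 𝕜] [IsStrictOrderedRing 𝕜]
    [AddCommMonoid E] [Module 𝕜 E] {s : Set E} {f : E → 𝕜} (hf : ConcaveOn 𝕜 s f)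
    (hf₀ : ∀ ⦃x⦄, x ∈ s → 0 < f x) : ConvexOn 𝕜 s f⁻¹ := by
  refine ⟨hf.1, fun x hx y hy a b ha hb hab => ?_⟩
  have hinv : ConvexOn 𝕜 (Ioi 0) fun t : 𝕜 => t⁻¹ := by
    simpa using convexOn_zpow (𝕜 := 𝕜) (-1)
  have hmix : 0 < a • f x + b • f y := by
    rcases ha.eq_or_lt with rfl | ha
    · rw [zero_smul, zero_add, (by simpa using hab : b = 1), one_smul]
      exact hf₀ hy
    · exact add_pos_of_pos_of_nonneg (smul_pos ha (hf₀ hx)) (smul_nonneg hb (hf₀ hy).le)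
  calc (f (a • x + b • y))⁻¹ ≤ (a • f x + b • f y)⁻¹ := inv_anti₀ hmix (hf.2 hx hy ha hb hab)
    _ ≤ a • (f x)⁻¹ + b • (f y)⁻¹ := hinv.2 (hf₀ hx) (hf₀ hy) ha hb hab

theorem concaveOn_sqrt_add_mul {a b : ℝ} (ha : 0 ≤ a) (hb : 0 ≤ b) :
    ConcaveOn ℝ (Ici 0) fun x : ℝ => √(a + b * x) := by
  refine (Real.strictConcaveOn_sqrt.concaveOn.comp_affineMap
    (AffineMap.const ℝ ℝ a + b • AffineMap.id ℝ ℝ)).subset (fun x (hx : 0 ≤ x) => ?_) (convex_Ici 0)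
  change 0 ≤ a + b * x
  positivity

theorem lt_sqrt_sq_add_mul {L Q C : ℝ} (hL : 0 < L) (hC : 0 < C) : Q < √(Q ^ 2 + 4 * L * C) :=
  Real.lt_sqrt_of_sq_lt (by nlinarith [mul_pos hL hC])

theorem channelUses_formula_eq_sq {L Q C : ℝ} (hL : 0 < L) (hQ : 0 < Q) (hC : 0 < C) :
    L / C + Q ^ 2 / (2 * C ^ 2) + (Q ^ 2 / (2 * C ^ 2)) * √(1 + 4 * L * C / Q ^ 2)
      = (2 * L / (√(Q ^ 2 + 4 * L * C) - Q)) ^ 2 := by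
  have hsqrt : √(1 + 4 * L * C / Q ^ 2) = √(Q ^ 2 + 4 * L * C) / Q := by
    rw [show 1 + 4 * L * C / Q ^ 2 = (Q ^ 2 + 4 * L * C) / Q ^ 2 by field_simp,
      Real.sqrt_div' _ (sq_nonneg Q), Real.sqrt_sq hQ.le]
  have hs2 : √(Q ^ 2 + 4 * L * C) ^ 2 = Q ^ 2 + 4 * L * C := Real.sq_sqrt (by positivity)
  have hden : √(Q ^ 2 + 4 * L * C) - Q ≠ 0 := (sub_pos.2 (lt_sqrt_sq_add_mul hL hC)).ne'
  rw [hsqrt]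
  generalize √(Q ^ 2 + 4 * L * C) = s at hs2 hden ⊢
  field_simp
  linear_combination (Q * s + 2 * L * C - Q ^ 2) * hs2

theorem stmt_2 (L Q : ℝ) (hL : 0 < L) (hQ : 0 < Q) :
    ConvexOn ℝ (Set.Ioi 0)
      (fun C : ℝ => L / C + Q ^ 2 / (2 * C ^ 2)
        + (Q ^ 2 / (2 * C ^ 2)) * Real.sqrt (1 + 4 * L * C / Q ^ 2)) := by
  have hden_pos : ∀ ⦃C : ℝ⦄, C ∈ Ioi 0 → 0 < √(Q ^ 2 + 4 * L * C) - Q :=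
    fun C hC => sub_pos.2 (lt_sqrt_sq_add_mul hL hC)
  have hden : ConcaveOn ℝ (Ioi 0) fun C : ℝ => √(Q ^ 2 + 4 * L * C) - Q :=
    ((concaveOn_sqrt_add_mul (sq_nonneg Q) (by positivity)).subset Ioi_subset_Ici_self
      (convex_Ioi 0)).sub (convexOn_const Q (convex_Ioi 0))
  have hroot : ConvexOn ℝ (Ioi 0) fun C : ℝ => 2 * L / (√(Q ^ 2 + 4 * L * C) - Q) := by
    simpa only [div_eq_mul_inv, Pi.inv_apply, smul_eq_mul] using
      (hden.inv hden_pos).smul (by positivity : 0 ≤ 2 * L)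
  exact (hroot.pow (fun C hC => (div_pos (by positivity) (hden_pos hC)).le) 2).congr
    fun C hC => (channelUses_formula_eq_sq hL hQ hC).symm
end

section
/- Let ρ > 0 and q ≥ 1 be an integer, and fix a nonnegative integer N. Consider f(q) = (qρ)^{qN}/(qN)! · (∑_{n=0}^{qN} (qρ)ⁿ/n!)⁻¹, the probability that a truncated Poisson(qρ) variable on {0,…,qN} equals its maximum value qN. If ρ < 1, then f(q) → 0 as q → ∞. -/
/-!
Bounding the normalising sum from below by its single term of index `K - m`, where `K = qN`,
bounds the blocking probability by `(qρ / (qN - m + 1)) ^ m`, which tends to `(ρ / N) ^ m` as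
`q → ∞`. Since `ρ / N < 1`, this limit is below any `ε > 0` once `m` is large.
-/

open Filter Topology Finset
open scoped Nat

theorem pow_div_factorial_le_mul_pow_div_factorial {x : ℝ} (hx : 0 ≤ x) {m K : ℕ} (hmK : m ≤ K) :
    x ^ K / K ! ≤ (x / ((K : ℝ) - m + 1)) ^ m * (x ^ (K - m) / (K - m)!) := by
  obtain ⟨j, rfl⟩ := Nat.exists_eq_add_of_le' hmK
  have hfac : ((j ! : ℕ) : ℝ) * ((j : ℝ) + 1) ^ m ≤ ((j + m)! : ℕ) := by
    exact_mod_cast Nat.factorial_mul_pow_le_factorial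
  have hj : ((j + m : ℕ) : ℝ) - m + 1 = j + 1 := by push_cast; ring
  rw [hj, Nat.add_sub_cancel, div_pow, div_mul_div_comm, ← pow_add, add_comm m j]
  exact div_le_div_of_nonneg_left (by positivity) (by positivity) (by linarith)

theorem pow_div_factorial_div_sum_le {x : ℝ} (hx : 0 ≤ x) {m K : ℕ} (hmK : m ≤ K) :
    (x ^ K / K !) / (∑ n ∈ range (K + 1), x ^ n / n !) ≤ (x / ((K : ℝ) - m + 1)) ^ m := by
  have hterm : x ^ (K - m) / (K - m)! ≤ ∑ n ∈ range (K + 1), x ^ n / n ! :=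
    single_le_sum (f := fun n => x ^ n / (n ! : ℝ)) (fun n _ => by positivity)
      (mem_range.2 (by omega))
  have hsum : 0 < ∑ n ∈ range (K + 1), x ^ n / n ! :=
    sum_pos' (fun n _ => by positivity) ⟨0, by simp⟩
  have hmK' : (m : ℝ) ≤ K := by exact_mod_cast hmK
  rw [div_le_iff₀ hsum]
  exact (pow_div_factorial_le_mul_pow_div_factorial hx hmK).trans
    (mul_le_mul_of_nonneg_left hterm (pow_nonneg (div_nonneg hx (by linarith)) m))

theorem stmt_12 (ρ : ℝ) (hρ0 : 0 < ρ) (hρ1 : ρ < 1) (N : ℕ) (hN : 1 ≤ N) :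
    Filter.Tendsto
      (fun q : ℕ =>
        ((q * ρ) ^ (q * N) / Nat.factorial (q * N)) /
          (∑ n ∈ Finset.range (q * N + 1), (q * ρ) ^ n / Nat.factorial n))
      Filter.atTop (nhds 0) := by
  have hN0 : (0 : ℝ) < N := by exact_mod_cast hN
  refine tendsto_order.2 ⟨fun a ha => Eventually.of_forall fun q => ha.trans_le ?_, fun ε hε => ?_⟩
  · exact div_nonneg (by positivity) (sum_nonneg fun n _ => by positivity)
  obtain ⟨m, hm⟩ : ∃ m : ℕ, (ρ / N) ^ m < ε :=
    exists_pow_lt_of_lt_one hε ((div_lt_one hN0).2 (hρ1.trans_le (by exact_mod_cast hN)))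
  have hbound : Tendsto (fun q : ℕ => (q * ρ / ((q * N : ℕ) - m + 1 : ℝ)) ^ m) atTop
      (𝓝 ((ρ / N) ^ m)) := by
    refine ((tendsto_add_mul_div_add_mul_atTop_nhds (0 : ℝ) (1 - m) ρ hN0.ne').pow m).congr
      fun q => ?_
    push_cast
    ring_nf
  filter_upwards [hbound.eventually_lt_const hm, eventually_ge_atTop m] with q hq hmq
  refine lt_of_le_of_lt ?_ hq
  exact_mod_cast pow_div_factorial_div_sum_le (by positivity)
    (hmq.trans (Nat.le_mul_of_pos_right q hN))
end
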